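/- For every integer d ≥ 23 there exists a unique t₀ > 0 such that d·( 3·arccos( cosh(2t₀)/(1 + 2·cosh(2t₀)) ) − π ) = 4π. Consequently, if (T₀, T₃) is a tetra-regular combinatorial triangulation with dᵢ = d for all vertices i, then the constant ball packing r = t₀·(1,…,1) ∈ (0,∞)^N satisfies K̃ᵢ(r) = 0 for all vertices i. -/

import Mathlib

/-!
At the constant packing `t • 𝟙` all six dihedral angles equal `arccos f(t)` with
`f(t) = cosh 2t / (1 + 2 cosh 2t)`, and `f` increases strictly from `f 0 = 1/3` towards `1/2`
on `[0, ∞)`. The defining equation of `t₀` says `f(t₀) = cos (π/3 + 4π/(3d))`; for `d ≥ 23`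
this cosine lies in `(1/3, 1/2)` because `cos (9π/23) > 1/3`, so `t₀` exists by the
intermediate value theorem and is unique by monotonicity. Since the constant packing lies in
`Ω`, each of the `d` tetrahedra at a vertex contributes the solid angle
`3 arccos f(t₀) - π = 4π/d`, and the curvature vanishes.
-/

open Real Finset Filter

/-- `y i = coth r i`. -/
noncomputable def yc (r : Fin 4 → ℝ) (i : Fin 4) : ℝ := Real.cosh (r i) / Real.sinh (r i)

/-- The quantity `Q(r)` whose positivity characterizes non-degenerate hyperbolic tetrahedra. -/
noncomputable def Qh (r : Fin 4 → ℝ) : ℝ :=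
  (∑ i, yc r i) ^ 2 - 2 * ∑ i, (yc r i) ^ 2 + 4

/-- The set of real ball packings of a tetrahedron. -/
noncomputable def OmegaSet : Set (Fin 4 → ℝ) := {r | (∀ i, 0 < r i) ∧ 0 < Qh r}

/-- The `i`-th virtual tetrahedron space `Dᵢ`. -/
noncomputable def Dset (i : Fin 4) : Set (Fin 4 → ℝ) :=
  {r | (∀ m, 0 < r m) ∧
    (∑ j ∈ Finset.univ.erase i, yc r j)
      + 2 * Real.sqrt (((∑ j ∈ Finset.univ.erase i, yc r j) ^ 2
          - ∑ j ∈ Finset.univ.erase i, (yc r j) ^ 2) / 2 + 1) ≤ yc r i}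

/-- The dihedral angle `β i j` of the hyperbolic tetrahedron determined by `r`. -/
noncomputable def betaAngle (r : Fin 4 → ℝ) (i j : Fin 4) : ℝ :=
  Real.arccos
    ((Real.sinh (r i) * Real.sinh (r j)
        * Real.sqrt (∏ m ∈ (Finset.univ.erase i).erase j, Real.sinh (r m)))
      / (4 * Real.sqrt (∏ m ∈ (Finset.univ.erase i).erase j, Real.sinh (r i + r j + r m)))
      * (Qh r - (yc r i + yc r j) ^ 2
          + ((∑ m ∈ (Finset.univ.erase i).erase j, yc r m) ^ 2
              - 4 * ∏ m ∈ (Finset.univ.erase i).erase j, yc r m)))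

/-- The solid angle `αᵢ` of the hyperbolic tetrahedron determined by `r`. -/
noncomputable def solidAngle (r : Fin 4 → ℝ) (i : Fin 4) : ℝ :=
  (∑ j ∈ Finset.univ.erase i, betaAngle r i j) - Real.pi

open Classical in
/-- The extended solid angle `α̃ᵢ`. -/
noncomputable def tildeAlpha (r : Fin 4 → ℝ) (i : Fin 4) : ℝ :=
  if r ∈ OmegaSet then solidAngle r i
  else if r ∈ Dset i then 2 * Real.pi else 0

/-- Given a ball packing `r` on the vertex set `Fin N`, a vertex `i` and a tetrahedron `s`
containing `i`, the associated local packing in `(0,∞)⁴`, with the radius of `i` first. -/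
noncomputable def localPacking {N : ℕ} (r : Fin N → ℝ) (i : Fin N) (s : Finset (Fin N)) :
    Fin 4 → ℝ :=
  fun m => if m = 0 then r i
    else r (((s.erase i).sort (· ≤ ·)).getD (m.val - 1) i)

/-- The extended combinatorial scalar curvature `K̃ᵢ(r)`. -/
noncomputable def Ktilde {N : ℕ} (T3 : Multiset (Finset (Fin N))) (r : Fin N → ℝ)
    (i : Fin N) : ℝ :=
  4 * Real.pi -
    ((T3.filter (fun s => i ∈ s)).map (fun s => tildeAlpha (localPacking r i s) 0)).sum

/-- The tetra-degree of the vertex `i`. -/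
def tetraDegree {N : ℕ} (T3 : Multiset (Finset (Fin N))) (i : Fin N) : ℕ :=
  (T3.filter (fun s => i ∈ s)).card

/-- `R` is a solution of the extended combinatorial Yamabe flow on the time domain `S`. -/
def IsExtYamabeFlowSolution {N : ℕ} (T3 : Multiset (Finset (Fin N)))
    (R : ℝ → Fin N → ℝ) (S : Set ℝ) : Prop :=
  (∀ t ∈ S, ∀ i, 0 < R t i) ∧
  ∀ t ∈ S, ∀ i, HasDerivWithinAt (fun u => R u i)
      (-(Ktilde T3 (R t) i) * Real.sinh (R t i)) S t

noncomputable def regularDihedralCos (t : ℝ) : ℝ := cosh (2 * t) / (1 + 2 * cosh (2 * t))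

lemma one_add_two_mul_cosh_pos (x : ℝ) : 0 < 1 + 2 * cosh x := by
  linarith [cosh_pos x]

lemma regularDihedralCos_eq_half_sub (t : ℝ) :
    regularDihedralCos t = 1 / 2 - 1 / 2 * (1 + 2 * cosh (2 * t))⁻¹ := by
  have := (one_add_two_mul_cosh_pos (2 * t)).ne'
  unfold regularDihedralCos
  field_simp
  ring

lemma regularDihedralCos_zero : regularDihedralCos 0 = 1 / 3 := by
  norm_num [regularDihedralCos]

lemma regularDihedralCos_mem_Icc (t : ℝ) : regularDihedralCos t ∈ Set.Icc (-1) 1 := by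
  have hpos : 0 < (1 + 2 * cosh (2 * t))⁻¹ := inv_pos.2 (one_add_two_mul_cosh_pos _)
  have hle : (1 + 2 * cosh (2 * t))⁻¹ ≤ 1 :=
    inv_le_one_of_one_le₀ (by linarith [cosh_pos (2 * t)])
  rw [regularDihedralCos_eq_half_sub]
  constructor <;> linarith

lemma continuous_regularDihedralCos : Continuous regularDihedralCos :=
  Continuous.div (by fun_prop) (by fun_prop) fun _ => (one_add_two_mul_cosh_pos _).ne'

lemma strictMonoOn_regularDihedralCos : StrictMonoOn regularDihedralCos (Set.Ici 0) := by
  intro a ha b hb hab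
  have hcosh : cosh (2 * a) < cosh (2 * b) := by
    rw [cosh_lt_cosh, abs_of_nonneg (by simp at ha; linarith),
      abs_of_nonneg (by simp at hb; linarith)]
    linarith
  simp only [regularDihedralCos_eq_half_sub]
  gcongr

lemma tendsto_regularDihedralCos_atTop :
    Tendsto regularDihedralCos atTop (nhds (1 / 2)) := by
  have hcosh : Tendsto (fun t => 1 + 2 * cosh (2 * t)) atTop atTop := by
    refine tendsto_atTop_mono (fun t => ?_) (tendsto_exp_atTop.comp
      (tendsto_id.const_mul_atTop two_pos))
    show exp (2 * t) ≤ _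
    rw [cosh_eq]
    linarith [exp_pos (-(2 * t))]
  have := (hcosh.inv_tendsto_atTop.const_mul (1 / 2 : ℝ)).const_sub (1 / 2 : ℝ)
  rw [mul_zero, sub_zero] at this
  exact this.congr fun t => (regularDihedralCos_eq_half_sub t).symm

lemma existsUnique_pos_regularDihedralCos_eq {a : ℝ} (ha : a ∈ Set.Ioo (1 / 3) (1 / 2)) :
    ∃! t, 0 < t ∧ regularDihedralCos t = a := by
  obtain ⟨T, haT, hT⟩ := ((tendsto_regularDihedralCos_atTop.eventually
    (lt_mem_nhds ha.2)).and (eventually_ge_atTop 0)).exists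
  have h0T : a ∈ Set.Ioo (regularDihedralCos 0) (regularDihedralCos T) := by
    rw [regularDihedralCos_zero]
    exact ⟨ha.1, haT⟩
  obtain ⟨t, ht, rfl⟩ := intermediate_value_Ioo hT continuous_regularDihedralCos.continuousOn h0T
  refine ⟨t, ⟨ht.1, rfl⟩, fun s ⟨hs, hst⟩ => ?_⟩
  exact strictMonoOn_regularDihedralCos.injOn (Set.mem_Ici.2 hs.le) (Set.mem_Ici.2 ht.1.le) hst

lemma one_third_lt_cos_nine_mul_pi_div_twentythree : 1 / 3 < cos (9 * π / 23) := by
  have hx : 9 * π / 23 = π / 2 - 5 * π / 46 := by ring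
  rw [hx, cos_pi_div_two_sub]
  have hlo : 0.3414 < 5 * π / 46 := by linarith [pi_gt_d6]
  have hhi : 5 * π / 46 < 0.3415 := by linarith [pi_lt_d6]
  have hsin := sin_gt_sub_cube (by positivity : 0 < 5 * π / 46)
  nlinarith [pow_lt_pow_left₀ hhi (by positivity) three_ne_zero]

lemma cos_pi_div_three_add_mem_Ioo {d : ℝ} (hd : 23 ≤ d) :
    cos (π / 3 + 4 * π / (3 * d)) ∈ Set.Ioo (1 / 3) (1 / 2) := by
  have hε : 0 < 4 * π / (3 * d) := by have := pi_pos; positivity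
  have hε' : 4 * π / (3 * d) ≤ 4 * π / 69 := by
    gcongr
    linarith
  constructor
  · refine one_third_lt_cos_nine_mul_pi_div_twentythree.trans_le
      (cos_le_cos_of_nonneg_of_le_pi (by positivity) (by linarith [pi_pos]) ?_)
    linarith
  · rw [← cos_pi_div_three]
    exact cos_lt_cos_of_nonneg_of_le_pi (by positivity) (by linarith [pi_pos]) (by linarith)

lemma mul_three_arccos_sub_pi_eq_iff {d x : ℝ} (hd : 2 ≤ d) (hx : x ∈ Set.Icc (-1) 1) :
    d * (3 * arccos x - π) = 4 * π ↔ x = cos (π / 3 + 4 * π / (3 * d)) := by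
  have hd0 : d ≠ 0 := by positivity
  have hc : π / 3 + 4 * π / (3 * d) ≤ π := by
    have : 4 * π / (3 * d) ≤ 4 * π / 6 := by gcongr; linarith
    linarith
  rw [← arccos_injOn.eq_iff hx ⟨neg_one_le_cos _, cos_le_one _⟩,
    arccos_cos (by have := pi_pos; positivity) hc]
  constructor
  · intro h
    field_simp at h ⊢
    linarith
  · intro h
    rw [h]
    field_simp
    ring

lemma sinh_add_add_self (t : ℝ) : sinh (t + t + t) = sinh t * (1 + 2 * cosh (2 * t)) := by
  rw [sinh_add, sinh_add, cosh_add, cosh_two_mul]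
  linear_combination sinh t * cosh_sq_sub_sinh_sq t

lemma betaAngle_const {t : ℝ} (ht : 0 < t) {i j : Fin 4} (hij : j ≠ i) :
    betaAngle (fun _ => t) i j = arccos (regularDihedralCos t) := by
  have hs : 0 < sinh t := sinh_pos_iff.2 ht
  have hcard : ((Finset.univ.erase i).erase j).card = 2 := by
    rw [card_erase_of_mem (mem_erase.2 ⟨hij, mem_univ j⟩), card_erase_of_mem (mem_univ i)]
    rfl
  simp only [betaAngle, Qh, yc, prod_const, sum_const, hcard, card_univ, Fintype.card_fin,
    nsmul_eq_mul, Nat.cast_ofNat]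
  rw [sqrt_sq hs.le, sqrt_sq (sinh_pos_iff.2 (by linarith)).le, sinh_add_add_self,
    regularDihedralCos, cosh_two_mul]
  have hden : 1 + 2 * (cosh t ^ 2 + sinh t ^ 2) ≠ 0 :=
    cosh_two_mul t ▸ (one_add_two_mul_cosh_pos (2 * t)).ne'
  congr 1
  field_simp
  ring

lemma solidAngle_const {t : ℝ} (ht : 0 < t) (i : Fin 4) :
    solidAngle (fun _ => t) i = 3 * arccos (regularDihedralCos t) - π := by
  rw [solidAngle, sum_congr rfl fun j hj => betaAngle_const ht (ne_of_mem_erase hj), sum_const,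
    card_erase_of_mem (mem_univ i)]
  norm_num

lemma const_mem_OmegaSet {t : ℝ} (ht : 0 < t) : (fun _ => t) ∈ OmegaSet := by
  refine ⟨fun _ => ht, ?_⟩
  simp only [Qh, yc, sum_const, card_univ, Fintype.card_fin, nsmul_eq_mul]
  nlinarith [sq_nonneg (cosh t / sinh t)]

lemma tildeAlpha_const {t : ℝ} (ht : 0 < t) (i : Fin 4) :
    tildeAlpha (fun _ => t) i = 3 * arccos (regularDihedralCos t) - π := by
  rw [tildeAlpha, if_pos (const_mem_OmegaSet ht), solidAngle_const ht]

lemma localPacking_const {N : ℕ} (t : ℝ) (i : Fin N) (s : Finset (Fin N)) :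
    localPacking (fun _ => t) i s = fun _ => t := by
  funext m
  simp only [localPacking, ite_self]

lemma Ktilde_const {N : ℕ} (T3 : Multiset (Finset (Fin N))) {t : ℝ} (ht : 0 < t) (i : Fin N) :
    Ktilde T3 (fun _ => t) i =
      4 * π - tetraDegree T3 i * (3 * arccos (regularDihedralCos t) - π) := by
  simp only [Ktilde, localPacking_const, tildeAlpha_const ht, Multiset.map_const',
    Multiset.sum_replicate, nsmul_eq_mul, tetraDegree]

/-- For every `d ≥ 23` there is a unique `t₀ > 0` with
`d(3 arccos(cosh 2t₀/(1+2 cosh 2t₀)) − π) = 4π`; consequently for any tetra-regular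
triangulation of degree `d`, the constant packing `t₀·𝟙` has vanishing extended curvature. -/
theorem stmt19 (d : ℕ) (hd : 23 ≤ d) :
    (∃! t₀ : ℝ, 0 < t₀ ∧
      (d : ℝ) * (3 * Real.arccos (Real.cosh (2 * t₀) / (1 + 2 * Real.cosh (2 * t₀)))
        - Real.pi) = 4 * Real.pi) ∧
    ∀ (N : ℕ), 1 ≤ N → ∀ (T3 : Multiset (Finset (Fin N))), (∀ s ∈ T3, s.card = 4) →
      (∀ i, tetraDegree T3 i = d) →
      ∀ t₀ : ℝ, (0 < t₀ ∧
        (d : ℝ) * (3 * Real.arccos (Real.cosh (2 * t₀) / (1 + 2 * Real.cosh (2 * t₀)))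
          - Real.pi) = 4 * Real.pi) →
      ∀ i, Ktilde T3 (fun _ => t₀) i = 0 := by
  have hd' : (23 : ℝ) ≤ d := by exact_mod_cast hd
  have hequation (t : ℝ) :
      d * (3 * arccos (regularDihedralCos t) - π) = 4 * π ↔
        regularDihedralCos t = cos (π / 3 + 4 * π / (3 * d)) :=
    mul_three_arccos_sub_pi_eq_iff (by linarith) (regularDihedralCos_mem_Icc t)
  refine ⟨?_, ?_⟩
  · exact (existsUnique_congr fun t => and_congr_right fun _ => hequation t).2
      (existsUnique_pos_regularDihedralCos_eq (cos_pi_div_three_add_mem_Ioo hd'))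
  · rintro N - T3 - hdeg t ⟨ht, heq⟩ i
    rw [Ktilde_const T3 ht, hdeg]
    exact sub_eq_zero.2 heq.symm
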